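/- Let ρ be a normal solution notion and f : Θ → X a social choice function. Then the canonical semi-operator γ^{(ρ,f)} is achievable if and only if it is f-achievable. -/

import Mathlib

open scoped Classical

namespace SeqMech

variable {I : Type*} {Θi : I → Type*} {X : Type*}

/-- Projection of a set of states onto agent `i`'s coordinate. -/
def proj (i : I) (E : Set (∀ j, Θi j)) : Set (Θi i) :=
  (fun θ => θ i) '' E

/-- Projection of a set of states onto the coordinates of the agents other than `i`. -/
def projNeg (i : I) (E : Set (∀ j, Θi j)) :
    Set (∀ j : {j : I // j ≠ i}, Θi j.1) :=
  (fun θ (j : {j : I // j ≠ i}) => θ j.1) '' E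

/-- The semi-operator property: nonempty sets are mapped to nonempty sets. -/
def IsSemiOp (γ : Set (∀ j, Θi j) → (∀ j, Θi j) → Set (∀ j, Θi j)) : Prop :=
  ∀ E θ, E.Nonempty → (γ E θ).Nonempty

/-- A solution notion: `R f γ E θ θ' i Fhat` means `ρ[f,(γ,E),θ,θ',i,Fhat] = 1`.  Its value
depends only on `(f, γ_i[E,θ], θ_i, θ'_i, Fhat_{-i})`. -/
structure SolutionNotion (I : Type*) (Θi : I → Type*) (X : Type*) where
  R : ((∀ j, Θi j) → X) →
      (Set (∀ j, Θi j) → (∀ j, Θi j) → Set (∀ j, Θi j)) →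
      Set (∀ j, Θi j) → (∀ j, Θi j) → (∀ j, Θi j) → I → Set (∀ j, Θi j) → Prop
  meas : ∀ f γ γ' E E' θ τ θ' τ' (i : I) Fhat Fhat',
      proj i (γ E θ) = proj i (γ' E' τ) →
      θ i = τ i → θ' i = τ' i →
      projNeg i Fhat = projNeg i Fhat' →
      (R f γ E θ θ' i Fhat ↔ R f γ' E' τ τ' i Fhat')

/-- Dissectibility of a solution notion. -/
def Dissectible (ρ : SolutionNotion I Θi X) : Prop :=
  ∀ f γ E θ θ' (i : I) Fhat,
    IsSemiOp γ → E.Nonempty → θ ∈ E → θ' ∈ E →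
    (¬ ρ.R f γ E θ θ' i Fhat ↔
      ∃ τ ∈ γ E θ, ∃ γ' : Set (∀ j, Θi j) → (∀ j, Θi j) → Set (∀ j, Θi j),
        IsSemiOp γ' ∧ γ' E θ = {θ, τ} ∧ ¬ ρ.R f γ' E θ θ' i Fhat)

/-- `θ >_i^{[(ρ,f),(γ,E)]} θ'`. -/
def gtRel (ρ : SolutionNotion I Θi X) (f : (∀ j, Θi j) → X)
    (γ : Set (∀ j, Θi j) → (∀ j, Θi j) → Set (∀ j, Θi j))
    (E : Set (∀ j, Θi j)) (i : I) (θ θ' : ∀ j, Θi j) : Prop :=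
  θ ∈ E ∧ θ' ∈ E ∧ ¬ ρ.R f γ E θ θ' i E

/-- `θ ∼_i^{[(ρ,f),(γ,E)]} θ'`. -/
def simRel (ρ : SolutionNotion I Θi X) (f : (∀ j, Θi j) → X)
    (γ : Set (∀ j, Θi j) → (∀ j, Θi j) → Set (∀ j, Θi j))
    (E : Set (∀ j, Θi j)) (i : I) (θ θ' : ∀ j, Θi j) : Prop :=
  θ i = θ' i ∨ gtRel ρ f γ E i θ θ' ∨ gtRel ρ f γ E i θ' θ

/-- `canonN ρ f n` is the semi-operator `γ^{(ρ,f)-(n+1)}`. -/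
noncomputable def canonN (ρ : SolutionNotion I Θi X) (f : (∀ j, Θi j) → X) :
    ℕ → Set (∀ j, Θi j) → (∀ j, Θi j) → Set (∀ j, Θi j)
  | 0 => fun E θ => if θ ∈ E then {θ} else E
  | n + 1 => fun E θ =>
      if θ ∈ E then
        ⋃ τ ∈ canonN ρ f n E θ,
          {θ' ∈ E | ∀ i, simRel ρ f (canonN ρ f n) E i τ θ'}
      else E

/-- The canonical semi-operator `γ^{(ρ,f)}`. -/
noncomputable def canon (ρ : SolutionNotion I Θi X) (f : (∀ j, Θi j) → X) :
    Set (∀ j, Θi j) → (∀ j, Θi j) → Set (∀ j, Θi j) :=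
  fun E θ => if θ ∈ E then ⋃ n, canonN ρ f n E θ else E

/-- Normality of a solution notion: truthful reporting is a best reply on any set
on which `f` is constant. -/
def Normal (ρ : SolutionNotion I Θi X) : Prop :=
  ∀ f γ E θ θ' (i : I),
    IsSemiOp γ → E.Nonempty → θ ∈ E → θ' ∈ E →
    (∀ a ∈ E, ∀ b ∈ E, f a = f b) → ρ.R f γ E θ θ' i E

/-- The iterates `γ_{(n)}[Θ,θ]` of a semi-operator. -/
def iter (γ : Set (∀ j, Θi j) → (∀ j, Θi j) → Set (∀ j, Θi j)) :
    ℕ → (∀ j, Θi j) → Set (∀ j, Θi j)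
  | 0, _ => Set.univ
  | n + 1, θ => γ (iter γ n θ) θ

/-- Achievability of a semi-operator. -/
def Achievable (γ : Set (∀ j, Θi j) → (∀ j, Θi j) → Set (∀ j, Θi j)) : Prop :=
  ∃ N : ℕ, ∀ θ, iter γ N θ = {θ}

/-- `f`-achievability of a semi-operator. -/
def FAchievable (γ : Set (∀ j, Θi j) → (∀ j, Θi j) → Set (∀ j, Θi j))
    (f : (∀ j, Θi j) → X) : Prop :=
  ∃ N : ℕ, ∀ θ, ∀ τ ∈ iter γ N θ, f τ = f θ

/-! On a set where `f` is constant, normality rules out every strict preference `>_i`, so the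
relations `∼_i` reduce to equality of types and the canonical semi-operator cannot leave `{θ}`.
Hence once the iterates of `γ^{(ρ,f)}` have made `f` constant, one more step isolates `θ`. -/

theorem Achievable.fAchievable {γ : Set (∀ j, Θi j) → (∀ j, Θi j) → Set (∀ j, Θi j)}
    (f : (∀ j, Θi j) → X) (hγ : Achievable γ) : FAchievable γ f := by
  obtain ⟨N, hN⟩ := hγ
  refine ⟨N, fun θ τ hτ => ?_⟩
  rw [hN θ, Set.mem_singleton_iff] at hτ
  rw [hτ]

theorem self_mem_iter {γ : Set (∀ j, Θi j) → (∀ j, Θi j) → Set (∀ j, Θi j)}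
    (hγ : ∀ E θ, θ ∈ E → θ ∈ γ E θ) (n : ℕ) (θ : ∀ j, Θi j) : θ ∈ iter γ n θ := by
  induction n with
  | zero => exact Set.mem_univ θ
  | succ n ih => exact hγ _ θ ih

theorem Achievable.of_fAchievable {γ : Set (∀ j, Θi j) → (∀ j, Θi j) → Set (∀ j, Θi j)}
    {f : (∀ j, Θi j) → X} (hself : ∀ E θ, θ ∈ E → θ ∈ γ E θ)
    (hconst : ∀ E θ, θ ∈ E → (∀ a ∈ E, ∀ b ∈ E, f a = f b) → γ E θ = {θ})
    (hγ : FAchievable γ f) : Achievable γ := by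
  obtain ⟨N, hN⟩ := hγ
  exact ⟨N + 1, fun θ => hconst _ θ (self_mem_iter hself N θ)
    fun a ha b hb => (hN θ a ha).trans (hN θ b hb).symm⟩

section Canonical

variable (ρ : SolutionNotion I Θi X) (f : (∀ j, Θi j) → X)

theorem self_mem_canonN (n : ℕ) {E : Set (∀ j, Θi j)} {θ : ∀ j, Θi j} (hθ : θ ∈ E) :
    θ ∈ canonN ρ f n E θ := by
  induction n with
  | zero => simp only [canonN, if_pos hθ, Set.mem_singleton_iff]
  | succ n ih =>
    simp only [canonN, if_pos hθ, Set.mem_iUnion]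
    exact ⟨θ, ih, hθ, fun _ => Or.inl rfl⟩

theorem self_mem_canon {E : Set (∀ j, Θi j)} {θ : ∀ j, Θi j} (hθ : θ ∈ E) :
    θ ∈ canon ρ f E θ := by
  simp only [canon, if_pos hθ, Set.mem_iUnion]
  exact ⟨0, self_mem_canonN ρ f 0 hθ⟩

theorem isSemiOp_canonN (n : ℕ) : IsSemiOp (canonN ρ f n) := by
  intro E θ hE
  by_cases hθ : θ ∈ E
  · exact ⟨θ, self_mem_canonN ρ f n hθ⟩
  · cases n <;> simpa only [canonN, if_neg hθ] using hE

variable {ρ} {f}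

theorem canonN_eq_singleton_of_const (hρ : Normal ρ) (n : ℕ) {E : Set (∀ j, Θi j)}
    {θ : ∀ j, Θi j} (hθ : θ ∈ E) (hf : ∀ a ∈ E, ∀ b ∈ E, f a = f b) :
    canonN ρ f n E θ = {θ} := by
  induction n with
  | zero => simp only [canonN, if_pos hθ]
  | succ n ih =>
    have no_gt : ∀ i a b, ¬ gtRel ρ f (canonN ρ f n) E i a b := fun i a b ⟨ha, hb, hR⟩ =>
      hR (hρ f _ E a b i (isSemiOp_canonN ρ f n) ⟨a, ha⟩ ha hb hf)
    ext θ'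
    simp only [canonN, if_pos hθ, ih, Set.mem_iUnion, Set.mem_singleton_iff, exists_prop,
      exists_eq_left, Set.mem_ofPred_eq, simRel, no_gt, or_false]
    constructor
    · rintro ⟨-, hsim⟩
      exact funext fun i => (hsim i).symm
    · rintro rfl
      exact ⟨hθ, fun _ => rfl⟩

theorem canon_eq_singleton_of_const (hρ : Normal ρ) {E : Set (∀ j, Θi j)} {θ : ∀ j, Θi j}
    (hθ : θ ∈ E) (hf : ∀ a ∈ E, ∀ b ∈ E, f a = f b) :
    canon ρ f E θ = {θ} := by
  simp only [canon, if_pos hθ, canonN_eq_singleton_of_const hρ _ hθ hf, Set.iUnion_const]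

end Canonical

theorem canon_achievable_iff_fAchievable_general
    (ρ : SolutionNotion I Θi X) (hρ : Normal ρ) (f : (∀ j, Θi j) → X) :
    Achievable (canon ρ f) ↔ FAchievable (canon ρ f) f :=
  ⟨Achievable.fAchievable f, Achievable.of_fAchievable (fun _ _ => self_mem_canon ρ f)
    fun _ _ => canon_eq_singleton_of_const hρ⟩

/-- for a normal solution notion `ρ` and an SCF `f`, the canonical
semi-operator `γ^{(ρ,f)}` is achievable iff it is `f`-achievable. -/
theorem canon_achievable_iff_fAchievable
    [Fintype I] [Nonempty I] [∀ i, Fintype (Θi i)] [∀ i, Nonempty (Θi i)]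
    (ρ : SolutionNotion I Θi X) (hρ : Normal ρ) (f : (∀ j, Θi j) → X) :
    Achievable (canon ρ f) ↔ FAchievable (canon ρ f) f :=
  canon_achievable_iff_fAchievable_general ρ hρ f

end SeqMech
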